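/- For every integer d ≥ 1, w_d = (3/2)·P{β(1/2, (d+1)/2) ≥ 1/4}, where β(a,b) denotes a Beta random variable with shape parameters a and b. -/

import Mathlib

open MeasureTheory Metric Filter

noncomputable section

abbrev Euc (d : ℕ) := EuclideanSpace ℝ (Fin d)

/-- `w_d`: the probability that two independent random vectors, each uniformly distributed
on the closed unit ball of ℝ^d, are within distance 1 of each other; equivalently, the
2d-dimensional volume of `{(x,y) : x,y ∈ B(0,1), ‖x-y‖ ≤ 1}` divided by `V_d ^ 2`. -/
def ballPairProb (d : ℕ) : ℝ :=
  (volume {p : Euc d × Euc d |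
      p.1 ∈ closedBall 0 1 ∧ p.2 ∈ closedBall 0 1 ∧ dist p.1 p.2 ≤ 1}).toReal /
    ((volume (closedBall (0 : Euc d) 1)).toReal) ^ 2

/-- The Beta(a,b) probability distribution on [0,1], with density proportional to
`x^(a-1) * (1-x)^(b-1)`. -/
def betaMeasure (a b : ℝ) : Measure ℝ :=
  (volume.restrict (Set.Ioo (0 : ℝ) 1)).withDensity fun x =>
    ENNReal.ofReal (Real.Gamma (a + b) / (Real.Gamma a * Real.Gamma b) *
      x ^ (a - 1) * (1 - x) ^ (b - 1))

namespace BallBeta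
open Set intervalIntegral


/-- core integrand `(1-u^2)^(n/2)` -/
def fI (n : ℕ) (u : ℝ) : ℝ := Real.sqrt (1 - u^2) ^ n

lemma fI_continuous (n : ℕ) : Continuous (fI n) := by
  unfold fI; fun_prop

lemma fI_nonneg (n : ℕ) (u : ℝ) : 0 ≤ fI n u := pow_nonneg (Real.sqrt_nonneg _) n

lemma fI_even (n : ℕ) (u : ℝ) : fI n (-u) = fI n u := by simp [fI]

/-- the "cap" integral -/
def AI (n : ℕ) (t : ℝ) : ℝ := ∫ u in (t/2)..1, fI n u

def KI (n : ℕ) : ℝ := ∫ u in (1/2:ℝ)..1, fI n u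

lemma KI_nonneg (n : ℕ) : 0 ≤ KI n :=
  intervalIntegral.integral_nonneg (by norm_num) (fun u _ => fI_nonneg n u)

lemma AI_nonneg (n : ℕ) {t : ℝ} (ht : t ≤ 2) : 0 ≤ AI n t :=
  intervalIntegral.integral_nonneg (by linarith) (fun u _ => fI_nonneg n u)

lemma AI_hasDerivAt (n : ℕ) (t : ℝ) :
    HasDerivAt (AI n) (-(fI n (t/2)) / 2) t := by
  have hF : ∀ x : ℝ, HasDerivAt (fun y => ∫ u in (1:ℝ)..y, fI n u) (fI n x) x := by
    intro x
    exact intervalIntegral.integral_hasDerivAt_right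
      ((fI_continuous n).intervalIntegrable _ _)
      ((fI_continuous n).stronglyMeasurableAtFilter _ _)
      (fI_continuous n).continuousAt
  have h2 : HasDerivAt (fun t : ℝ => t / 2) (1/2) t := by
    simpa using (hasDerivAt_id t).div_const 2
  have := ((hF (t/2)).comp t h2).neg
  have heq : AI n = fun t : ℝ => -∫ u in (1:ℝ)..(t/2), fI n u := by
    funext s; rw [AI, intervalIntegral.integral_symm]
  rw [heq]
  exact this.congr_deriv (by ring)

lemma AI_continuous (n : ℕ) : Continuous (AI n) :=
  (Differentiable.continuous fun t => (AI_hasDerivAt n t).differentiableAt)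

lemma fI_comp_one_sub_two_sq {n : ℕ} {t : ℝ} (h0 : 0 ≤ t) (h1 : t ≤ 1) :
    fI n (1 - 2*t^2) = (2*t)^n * fI n t := by
  have h : 1 - (1 - 2*t^2)^2 = (2*t)^2 * (1 - t^2) := by ring
  rw [fI, h, Real.sqrt_mul (sq_nonneg _), Real.sqrt_sq (by linarith), mul_pow, fI]

/-- the substitution identity -/
lemma half_identity (n : ℕ) :
    KI n = 2^(n+2) * ∫ t in (0:ℝ)..(1/2), t^(n+1) * fI n t := by
  have hderiv : ∀ x ∈ uIcc (0:ℝ) (1/2),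
      HasDerivAt (fun t : ℝ => 1 - 2*t^2) (-4*x) x := by
    intro x _
    have h1 : HasDerivAt (fun t : ℝ => t^2) (2*x) x := by
      simpa using hasDerivAt_pow 2 x
    have := (h1.const_mul 2).const_sub 1
    exact this.congr_deriv (by ring)
  have h := intervalIntegral.integral_comp_smul_deriv hderiv
    (by fun_prop) (fI_continuous n)
  have hL : (∫ t in (0:ℝ)..(1/2), (-4*t) • (fI n ∘ fun t => 1 - 2*t^2) t)
      = -(2^(n+2) * ∫ t in (0:ℝ)..(1/2), t^(n+1) * fI n t) := by
    rw [← intervalIntegral.integral_const_mul, ← intervalIntegral.integral_neg]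
    apply intervalIntegral.integral_congr
    intro t ht
    rw [uIcc_of_le (by norm_num : (0:ℝ) ≤ 1/2)] at ht
    have h0 : 0 ≤ t := ht.1
    have h1 : t ≤ 1 := le_trans ht.2 (by norm_num)
    simp only [Function.comp, smul_eq_mul]
    rw [fI_comp_one_sub_two_sq h0 h1, mul_pow]
    ring
  have hR : (1:ℝ) - 2*(0:ℝ)^2 = 1 := by norm_num
  have hR2 : (1:ℝ) - 2*(1/2:ℝ)^2 = 1/2 := by norm_num
  rw [hL, hR, hR2] at h
  have hsymm : (∫ x in (1:ℝ)..(1/2), fI n x) = -(KI n) := by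
    rw [KI, intervalIntegral.integral_symm]
  rw [hsymm] at h
  linarith [h]

/-- integration by parts main computation -/
lemma parts_main (n : ℕ) :
    ((n:ℝ)+1) * ∫ r in (0:ℝ)..1, r^n * AI n r = (3/2) * KI n := by
  have hu : ∀ x ∈ uIcc (0:ℝ) 1, HasDerivAt (AI n) (-(fI n (x/2)) / 2) x :=
    fun x _ => AI_hasDerivAt n x
  have hv : ∀ x ∈ uIcc (0:ℝ) 1, HasDerivAt (fun y : ℝ => y^(n+1)) (((n:ℝ)+1) * x^n) x := by
    intro x _
    simpa using hasDerivAt_pow (n+1) x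
  have hcu : Continuous fun x : ℝ => -(fI n (x/2)) / 2 :=
    (((fI_continuous n).comp (continuous_id.div_const 2)).neg).div_const 2
  have hcv : Continuous fun x : ℝ => ((n:ℝ)+1) * x^n := by fun_prop
  have hparts := intervalIntegral.integral_mul_deriv_eq_deriv_mul hu hv
    (hcu.intervalIntegrable _ _) (hcv.intervalIntegrable _ _)
  -- hparts : ∫ x in 0..1, AI n x * ((n+1) * x^n) = AI n 1 * 1^(n+1) - AI n 0 * 0^(n+1) - ∫ x in 0..1, (-(fI n (x/2))/2) * x^(n+1)
  have hA1 : AI n 1 = KI n := by rw [AI, KI]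
  have hzero : (0:ℝ)^(n+1) = 0 := by simp
  -- substitution r = 2t in the remaining integral
  have hsub : (∫ x in (0:ℝ)..1, fI n (x/2) * x^(n+1))
      = 2^(n+2) * ∫ t in (0:ℝ)..(1/2), t^(n+1) * fI n t := by
    have hfun : (fun x : ℝ => fI n (x/2) * x^(n+1))
        = fun x : ℝ => (fun y : ℝ => fI n y * (2*y)^(n+1)) (x/2) := by
      funext x
      show fI n (x/2) * x^(n+1) = fI n (x/2) * (2*(x/2))^(n+1)
      rw [show 2*(x/2) = x by ring]
    have h1 : (∫ x in (0:ℝ)..1, (fun y : ℝ => fI n y * (2*y)^(n+1)) (x/2))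
        = (2:ℝ) • ∫ t in ((0:ℝ)/2)..((1:ℝ)/2), fI n t * (2*t)^(n+1) :=
      intervalIntegral.integral_comp_div (fun y : ℝ => fI n y * (2*y)^(n+1)) two_ne_zero
    calc (∫ x in (0:ℝ)..1, fI n (x/2) * x^(n+1))
        = ∫ x in (0:ℝ)..1, (fun y : ℝ => fI n y * (2*y)^(n+1)) (x/2) := by rw [← hfun]
      _ = (2:ℝ) • ∫ t in ((0:ℝ)/2)..((1:ℝ)/2), fI n t * (2*t)^(n+1) := h1
      _ = 2^(n+2) * ∫ t in (0:ℝ)..(1/2), t^(n+1) * fI n t := by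
          rw [show (0:ℝ)/2 = 0 by norm_num, show (1:ℝ)/2 = (1/2:ℝ) by norm_num, smul_eq_mul,
            ← intervalIntegral.integral_const_mul, ← intervalIntegral.integral_const_mul]
          apply intervalIntegral.integral_congr
          intro t _
          show 2 * (fI n t * (2*t)^(n+1)) = 2^(n+2) * (t^(n+1) * fI n t)
          rw [mul_pow]
          ring
  have hflip : (∫ x in (0:ℝ)..1, AI n x * (((n:ℝ)+1) * x^n))
      = ((n:ℝ)+1) * ∫ r in (0:ℝ)..1, r^n * AI n r := by
    rw [← intervalIntegral.integral_const_mul]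
    apply intervalIntegral.integral_congr
    intro t _; ring
  have hneg : (∫ x in (0:ℝ)..1, (-(fI n (x/2)) / 2) * x^(n+1))
      = -(1/2) * ∫ x in (0:ℝ)..1, fI n (x/2) * x^(n+1) := by
    rw [← intervalIntegral.integral_const_mul]
    apply intervalIntegral.integral_congr
    intro t _; ring
  rw [hflip, hA1, hzero, hneg, hsub] at hparts
  rw [hparts, ← half_identity n]
  ring
/-- the substitution x = u² -/
lemma beta_subst (n : ℕ) :
    ∫ x in (1/4:ℝ)..1, (Real.sqrt x)⁻¹ * Real.sqrt (1-x) ^ n = 2 * KI n := by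
  set g : ℝ → ℝ := fun x => (Real.sqrt x)⁻¹ * Real.sqrt (1-x) ^ n with hg
  have hderiv : ∀ u ∈ uIcc (1/2:ℝ) 1, HasDerivAt (fun u : ℝ => u^2) (2*u) u := by
    intro u _; simpa using hasDerivAt_pow 2 u
  have himg : ((fun u : ℝ => u^2) '' uIcc (1/2:ℝ) 1) ⊆ Icc (1/4:ℝ) 1 := by
    rintro x ⟨u, hu, rfl⟩
    rw [uIcc_of_le (by norm_num : (1/2:ℝ) ≤ 1)] at hu
    have h1 : (0:ℝ) ≤ 1 - u := by linarith [hu.2]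
    have h2 : (0:ℝ) ≤ 1 + u := by linarith [hu.1]
    have h3 : (0:ℝ) ≤ u - 1/2 := by linarith [hu.1]
    have h4 : (0:ℝ) ≤ u + 1/2 := by linarith [hu.1]
    refine ⟨?_, ?_⟩
    · show (1/4:ℝ) ≤ u^2
      nlinarith [mul_nonneg h3 h4]
    · show u^2 ≤ (1:ℝ)
      nlinarith [mul_nonneg h1 h2]
  have hgc : ContinuousOn g (Icc (1/4:ℝ) 1) := by
    apply ContinuousOn.mul
    · apply ContinuousOn.inv₀ (Real.continuous_sqrt.continuousOn)
      intro x hx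
      exact ne_of_gt (Real.sqrt_pos.2 (by linarith [hx.1]))
    · exact ((Real.continuous_sqrt.comp (continuous_const.sub continuous_id)).pow n).continuousOn
  have h := intervalIntegral.integral_comp_smul_deriv' hderiv (by fun_prop) (hgc.mono himg)
  have heq : (∫ u in (1/2:ℝ)..1, (2*u) • (g ∘ fun u : ℝ => u^2) u) = 2 * KI n := by
    rw [KI, ← intervalIntegral.integral_const_mul]
    apply intervalIntegral.integral_congr
    intro u hu
    rw [uIcc_of_le (by norm_num : (1/2:ℝ) ≤ 1)] at hu
    have hu0 : (0:ℝ) < u := by linarith [hu.1]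
    show (2*u) * (g (u^2)) = 2 * fI n u
    rw [hg]
    simp only []
    rw [Real.sqrt_sq hu0.le, fI]
    field_simp
  rw [heq] at h
  rw [show ((1/2:ℝ))^2 = (1/4:ℝ) by norm_num, show ((1:ℝ))^2 = (1:ℝ) by norm_num] at h
  exact h.symm

lemma beta_eval (n : ℕ) (b : ℝ) (hb : b = (n:ℝ)/2 + 1) :
    (betaMeasure (1/2) b {x : ℝ | 1/4 ≤ x}).toReal
      = Real.Gamma (1/2 + b) / (Real.Gamma (1/2) * Real.Gamma b) * (2 * KI n) := by
  set c : ℝ := Real.Gamma (1/2 + b) / (Real.Gamma (1/2) * Real.Gamma b) with hc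
  have hb0 : (0:ℝ) < b := by rw [hb]; positivity
  have hcpos : 0 < c := by
    rw [hc]
    apply div_pos (Real.Gamma_pos_of_pos (by linarith))
    exact mul_pos (Real.Gamma_pos_of_pos (by norm_num)) (Real.Gamma_pos_of_pos hb0)
  have hsetI : {x : ℝ | 1/4 ≤ x} = Ici (1/4:ℝ) := rfl
  have hset : Ici (1/4:ℝ) ∩ Ioo 0 1 = Ico (1/4:ℝ) 1 := by
    ext x
    simp only [mem_inter_iff, mem_Ici, mem_Ioo, mem_Ico]
    constructor
    · rintro ⟨h1, _, h3⟩; exact ⟨h1, h3⟩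
    · rintro ⟨h1, h2⟩; exact ⟨h1, by linarith, h2⟩
  rw [hsetI, betaMeasure, withDensity_apply _ measurableSet_Ici,
    Measure.restrict_restrict measurableSet_Ici, hset]
  have hcong : ∫⁻ x in Ico (1/4:ℝ) 1,
      ENNReal.ofReal (Real.Gamma (1/2 + b) / (Real.Gamma (1/2) * Real.Gamma b) *
        x ^ ((1:ℝ)/2 - 1) * (1 - x) ^ (b - 1))
      = ∫⁻ x in Ico (1/4:ℝ) 1, ENNReal.ofReal (c * ((Real.sqrt x)⁻¹ * Real.sqrt (1-x) ^ n)) := by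
    apply setLIntegral_congr_fun measurableSet_Ico
    intro x hx
    beta_reduce
    congr 1
    have hx0 : (0:ℝ) < x := by linarith [hx.1]
    have hx1 : (0:ℝ) ≤ 1 - x := by linarith [hx.2]
    have e1 : x ^ ((1:ℝ)/2 - 1) = (Real.sqrt x)⁻¹ := by
      rw [show (1:ℝ)/2 - 1 = -(1/2) by norm_num, Real.rpow_neg hx0.le,
        Real.sqrt_eq_rpow]
    have e2 : (1 - x) ^ (b - 1) = Real.sqrt (1-x) ^ n := by
      rw [show b - 1 = (1/2) * (n:ℝ) by rw [hb]; ring, Real.rpow_mul hx1,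
        Real.rpow_natCast, Real.sqrt_eq_rpow]
    rw [e1, e2, hc]
    ring
  rw [hcong]
  have hint : IntegrableOn (fun x : ℝ => c * ((Real.sqrt x)⁻¹ * Real.sqrt (1-x) ^ n))
      (Ico (1/4:ℝ) 1) volume := by
    apply IntegrableOn.mono_set (t := Icc (1/4:ℝ) 1) _ Ico_subset_Icc_self
    apply ContinuousOn.integrableOn_compact isCompact_Icc
    apply ContinuousOn.mul continuousOn_const
    apply ContinuousOn.mul
    · apply ContinuousOn.inv₀ (Real.continuous_sqrt.continuousOn)
      intro x hx
      exact ne_of_gt (Real.sqrt_pos.2 (by linarith [hx.1]))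
    · exact ((Real.continuous_sqrt.comp (continuous_const.sub continuous_id)).pow n).continuousOn
  have hnn : 0 ≤ᵐ[volume.restrict (Ico (1/4:ℝ) 1)]
      fun x : ℝ => c * ((Real.sqrt x)⁻¹ * Real.sqrt (1-x) ^ n) := by
    apply Filter.Eventually.of_forall
    intro x
    positivity
  rw [← ofReal_integral_eq_lintegral_ofReal hint hnn, ENNReal.toReal_ofReal
    (by apply MeasureTheory.integral_nonneg; intro x; positivity)]
  rw [MeasureTheory.integral_const_mul, MeasureTheory.integral_Ico_eq_integral_Ioo,
    ← MeasureTheory.integral_Ioc_eq_integral_Ioo,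
    ← intervalIntegral.integral_of_le (by norm_num : (1/4:ℝ) ≤ 1), beta_subst n]
def e₀ (n : ℕ) : Euc (n+1) := EuclideanSpace.single 0 1

lemma prod_vol (n : ℕ) :
    volume {p : Euc (n+1) × Euc (n+1) |
        p.1 ∈ closedBall 0 1 ∧ p.2 ∈ closedBall 0 1 ∧ dist p.1 p.2 ≤ 1}
      = ∫⁻ x in closedBall (0 : Euc (n+1)) 1,
          volume (closedBall (0 : Euc (n+1)) 1 ∩ closedBall x 1) := by
  set S := {p : Euc (n+1) × Euc (n+1) |
      p.1 ∈ closedBall 0 1 ∧ p.2 ∈ closedBall 0 1 ∧ dist p.1 p.2 ≤ 1} with hSdef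
  have hS : MeasurableSet S := by
    have h1 : IsClosed {p : Euc (n+1) × Euc (n+1) | p.1 ∈ closedBall 0 1} :=
      isClosed_closedBall.preimage continuous_fst
    have h2 : IsClosed {p : Euc (n+1) × Euc (n+1) | p.2 ∈ closedBall 0 1} :=
      isClosed_closedBall.preimage continuous_snd
    have h3 : IsClosed {p : Euc (n+1) × Euc (n+1) | dist p.1 p.2 ≤ 1} :=
      isClosed_le (by fun_prop) continuous_const
    exact ((h1.inter (h2.inter h3))).measurableSet
  rw [Measure.volume_eq_prod, Measure.prod_apply hS]
  have hpt : ∀ x : Euc (n+1), volume (Prod.mk x ⁻¹' S)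
      = Set.indicator (closedBall (0 : Euc (n+1)) 1)
        (fun x => volume (closedBall (0 : Euc (n+1)) 1 ∩ closedBall x 1)) x := by
    intro x
    by_cases hx : x ∈ closedBall (0 : Euc (n+1)) 1
    · rw [Set.indicator_of_mem hx]
      congr 1
      ext y
      simp only [hSdef, mem_preimage, mem_setOf_eq, mem_inter_iff, mem_closedBall]
      constructor
      · rintro ⟨-, h2, h3⟩; exact ⟨h2, by rw [dist_comm]; exact h3⟩
      · rintro ⟨h2, h3⟩
        refine ⟨by simpa [mem_closedBall] using hx, h2, ?_⟩
        rw [dist_comm]; exact h3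
    · rw [Set.indicator_of_notMem hx]
      have : Prod.mk x ⁻¹' S = ∅ := by
        ext y
        simp only [hSdef, mem_preimage, mem_setOf_eq, mem_empty_iff_false, iff_false]
        rintro ⟨h1, -, -⟩; exact hx h1
      rw [this, measure_empty]
  rw [lintegral_congr hpt, lintegral_indicator measurableSet_closedBall]

lemma rot_vol (n : ℕ) (x : Euc (n+1)) :
    volume (closedBall (0 : Euc (n+1)) 1 ∩ closedBall x 1)
      = volume (closedBall (0 : Euc (n+1)) 1 ∩ closedBall (‖x‖ • e₀ n) 1) := by
  set y : Euc (n+1) := ‖x‖ • e₀ n with hy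
  have hnorm : ‖x‖ = ‖y‖ := by
    rw [hy, norm_smul, e₀, EuclideanSpace.norm_single]
    simp [abs_of_nonneg (norm_nonneg x)]
  set T := Submodule.reflection (ℝ ∙ (x - y))ᗮ with hT
  have hTx : T x = y := Submodule.reflection_sub hnorm
  have hinv : ∀ c, T (T c) = c := Submodule.reflection_involutive _
  have hTy : T y = x := by rw [← hTx, hinv]
  have hpre : ∀ c : Euc (n+1), T ⁻¹' (closedBall c 1) = closedBall (T c) 1 := by
    intro c
    ext z
    simp only [mem_preimage, mem_closedBall]
    conv_lhs => rw [show c = T (T c) from (hinv c).symm]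
    rw [T.dist_map]
  have hmp := T.measurePreserving
  have hps : closedBall (0 : Euc (n+1)) 1 ∩ closedBall x 1
      = T ⁻¹' (closedBall (0 : Euc (n+1)) 1 ∩ closedBall y 1) := by
    rw [Set.preimage_inter, hpre, hpre, hTy, map_zero]
  rw [hps, hmp.measure_preimage
    ((measurableSet_closedBall.inter measurableSet_closedBall).nullMeasurableSet)]
def tailE (n : ℕ) (x : Euc (n+1)) : Euc n :=
  (MeasurableEquiv.toLp 2 (Fin n → ℝ)) (fun j => x (Fin.succAbove (0 : Fin (n+1)) j))

def Phi (n : ℕ) (x : Euc (n+1)) : ℝ × Euc n := (x 0, tailE n x)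

lemma Phi_measurePreserving (n : ℕ) :
    MeasurePreserving (Phi n) volume (volume.prod volume) := by
  have m1 := EuclideanSpace.volume_preserving_symm_measurableEquiv_toLp (Fin (n+1))
  have m2 := volume_preserving_piFinSuccAbove (fun _ : Fin (n+1) => ℝ) 0
  have m3 := (EuclideanSpace.volume_preserving_symm_measurableEquiv_toLp (Fin n)).symm
  have m4 := (MeasurePreserving.id (volume : Measure ℝ)).prod m3
  have hcomp := m4.comp (m2.comp m1)
  have heq : (Prod.map id ⇑(MeasurableEquiv.toLp 2 (Fin n → ℝ)).symm.symm) ∘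
      (⇑(MeasurableEquiv.piFinSuccAbove (fun _ : Fin (n+1) => ℝ) 0) ∘
        ⇑(MeasurableEquiv.toLp 2 (Fin (n+1) → ℝ)).symm) = Phi n := by
    funext x
    rfl
  rw [heq] at hcomp
  convert hcomp using 1

lemma tailE_apply (n : ℕ) (x : Euc (n+1)) (j : Fin n) :
    tailE n x j = x j.succ := by
  simp [tailE, Fin.succAbove_zero]

lemma norm_sq_split (n : ℕ) (x : Euc (n+1)) :
    ‖x‖^2 = (x 0)^2 + ‖tailE n x‖^2 := by
  have h : ∀ (k : ℕ) (y : Euc k), ‖y‖^2 = ∑ i, (y i)^2 := by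
    intro k y
    rw [EuclideanSpace.norm_eq, Real.sq_sqrt (by positivity)]
    simp [sq_abs]
  rw [h (n+1) x, h n (tailE n x), Fin.sum_univ_succ]
  simp only [tailE_apply]
lemma vol_cB (k : ℕ) {r : ℝ} (hr : 0 ≤ r) :
    volume (closedBall (0 : Euc k) r)
      = ENNReal.ofReal (r^k) * volume (closedBall (0 : Euc k) 1) := by
  cases k with
  | zero =>
    have huniv : ∀ s : ℝ, 0 ≤ s → closedBall (0 : Euc 0) s = univ := by
      intro s hs
      ext y
      simp only [mem_closedBall, mem_univ, iff_true]
      have : y = 0 := Subsingleton.elim _ _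
      simp [this, hs]
    rw [huniv r hr, huniv 1 zero_le_one, pow_zero, ENNReal.ofReal_one, one_mul]
  | succ m =>
    rw [Measure.addHaar_closedBall' volume _ hr, finrank_euclideanSpace_fin]

lemma slice_vol (n : ℕ) {t : ℝ} (ht0 : 0 ≤ t) (ht1 : t ≤ 1) :
    volume (closedBall (0 : Euc (n+1)) 1 ∩ closedBall (t • e₀ n) 1)
      = volume (closedBall (0 : Euc n) 1) * ENNReal.ofReal (2 * AI n t) := by
  classical
  set m : ℝ → ℝ := fun a => min (1 - a^2) (1 - (a-t)^2) with hm
  set q : ℝ → ℝ := fun a => Real.sqrt (m a) ^ n with hq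
  set A : Set (ℝ × Euc n) :=
    {p : ℝ × Euc n | p.1^2 + ‖p.2‖^2 ≤ 1 ∧ (p.1 - t)^2 + ‖p.2‖^2 ≤ 1} with hA
  -- step 1: the intersection is the preimage of A
  have hpre : closedBall (0 : Euc (n+1)) 1 ∩ closedBall (t • e₀ n) 1 = Phi n ⁻¹' A := by
    ext x
    have hx1 : ‖x‖^2 = (x 0)^2 + ‖tailE n x‖^2 := norm_sq_split n x
    have hsub : ∀ j : Fin n, (x - t • e₀ n) j.succ = x j.succ := by
      intro j
      have : (t • e₀ n) j.succ = 0 := by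
        simp [e₀, EuclideanSpace.single_apply, Fin.succ_ne_zero j]
      simp [this]
    have hsub0 : (x - t • e₀ n) 0 = x 0 - t := by
      simp [e₀, EuclideanSpace.single_apply]
    have htail : tailE n (x - t • e₀ n) = tailE n x := by
      apply PiLp.ext
      intro j
      rw [tailE_apply, tailE_apply, hsub]
    have hx2 : ‖x - t • e₀ n‖^2 = (x 0 - t)^2 + ‖tailE n x‖^2 := by
      rw [norm_sq_split n, hsub0, htail]
    simp only [mem_inter_iff, mem_closedBall, mem_preimage, hA, mem_setOf_eq, Phi,
      dist_zero_right, dist_eq_norm, sub_zero]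
    have e1 : ‖x‖ ≤ 1 ↔ ‖x‖^2 ≤ 1 := by
      constructor
      · intro h; nlinarith [norm_nonneg x]
      · intro h; nlinarith [norm_nonneg x]
    have e2 : ‖x - t • e₀ n‖ ≤ 1 ↔ ‖x - t • e₀ n‖^2 ≤ 1 := by
      constructor
      · intro h; nlinarith [norm_nonneg (x - t • e₀ n)]
      · intro h; nlinarith [norm_nonneg (x - t • e₀ n)]
    rw [e1, e2, hx1, hx2]
  have hAmeas : MeasurableSet A := by
    have h1 : IsClosed {p : ℝ × Euc n | p.1^2 + ‖p.2‖^2 ≤ 1} :=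
      isClosed_le (by fun_prop) continuous_const
    have h2 : IsClosed {p : ℝ × Euc n | (p.1 - t)^2 + ‖p.2‖^2 ≤ 1} :=
      isClosed_le (by fun_prop) continuous_const
    exact (h1.inter h2).measurableSet
  rw [hpre, (Phi_measurePreserving n).measure_preimage hAmeas.nullMeasurableSet,
    Measure.prod_apply hAmeas]
  -- step 2: slice volumes
  have hslice : ∀ a : ℝ, volume (Prod.mk a ⁻¹' A)
      = Set.indicator (Icc (t-1) 1)
          (fun a => volume (closedBall (0 : Euc n) 1) * ENNReal.ofReal (q a)) a := by
    intro a
    have hsetA : Prod.mk a ⁻¹' A = {y : Euc n | ‖y‖^2 ≤ m a} := by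
      ext y
      simp only [mem_preimage, hA, mem_setOf_eq, hm, le_min_iff]
      constructor
      · rintro ⟨h1, h2⟩; exact ⟨by linarith, by linarith⟩
      · rintro ⟨h1, h2⟩; exact ⟨by linarith, by linarith⟩
    by_cases hmem : a ∈ Icc (t-1) 1
    · have hma : 0 ≤ m a := by
        rw [hm]
        simp only [le_min_iff]
        constructor
        · nlinarith [hmem.1, hmem.2]
        · nlinarith [hmem.1, hmem.2]
      have hball : {y : Euc n | ‖y‖^2 ≤ m a} = closedBall (0 : Euc n) (Real.sqrt (m a)) := by
        ext y
        simp only [mem_setOf_eq, mem_closedBall, dist_zero_right]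
        rw [Real.le_sqrt (norm_nonneg y) hma]
      rw [Set.indicator_of_mem hmem, hsetA, hball, vol_cB n (Real.sqrt_nonneg _), hq,
        mul_comm]
    · rw [Set.indicator_of_notMem hmem]
      have hempty : {y : Euc n | ‖y‖^2 ≤ m a} = ∅ := by
        ext y
        simp only [mem_setOf_eq, mem_empty_iff_false, iff_false]
        intro hcon
        apply hmem
        have hy : (0:ℝ) ≤ ‖y‖^2 := sq_nonneg _
        have h1 : (0:ℝ) ≤ 1 - a^2 := le_trans (le_trans hy hcon) (min_le_left _ _)
        have h2 : (0:ℝ) ≤ 1 - (a-t)^2 := le_trans (le_trans hy hcon) (min_le_right _ _)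
        rw [mem_Icc]
        constructor <;> nlinarith
      rw [hsetA, hempty, measure_empty]
  rw [lintegral_congr hslice, lintegral_indicator measurableSet_Icc]
  have hVlt : volume (closedBall (0 : Euc n) 1) < ⊤ := measure_closedBall_lt_top
  have hVne : volume (closedBall (0 : Euc n) 1) ≠ ⊤ := hVlt.ne
  rw [lintegral_const_mul' _ _ hVne]
  congr 1
  have hqc : Continuous q := by
    rw [hq]
    apply Continuous.pow
    apply Real.continuous_sqrt.comp
    exact Continuous.min (by fun_prop) (by fun_prop)
  have hqnn : ∀ a, 0 ≤ q a := fun a => pow_nonneg (Real.sqrt_nonneg _) n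
  have hint : IntegrableOn q (Icc (t-1) 1) volume :=
    hqc.continuousOn.integrableOn_compact isCompact_Icc
  have hsplit := intervalIntegral.integral_add_adjacent_intervals
    (a := t-1) (b := t/2) (c := 1) (f := q) (μ := volume)
    (hqc.intervalIntegrable _ _) (hqc.intervalIntegrable _ _)
  have hp2 : ∫ a in (t/2)..1, q a = AI n t := by
    rw [AI]
    apply intervalIntegral.integral_congr
    intro a ha
    rw [uIcc_of_le (by linarith : t/2 ≤ (1:ℝ))] at ha
    have hma : m a = 1 - a^2 :=
      min_eq_left (by nlinarith [mul_nonneg ht0 (by linarith [ha.1] : (0:ℝ) ≤ 2*a - t)])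
    show Real.sqrt (m a) ^ n = fI n a
    rw [hma, fI]
  have hp1 : ∫ a in (t-1)..(t/2), q a = AI n t := by
    have hcong : ∫ a in (t-1)..(t/2), q a = ∫ a in (t-1)..(t/2), fI n (a - t) := by
      apply intervalIntegral.integral_congr
      intro a ha
      rw [uIcc_of_le (by linarith : t-1 ≤ t/2)] at ha
      have hma : m a = 1 - (a-t)^2 :=
        min_eq_right (by nlinarith [mul_nonneg ht0 (by linarith [ha.2] : (0:ℝ) ≤ t - 2*a)])
      show Real.sqrt (m a) ^ n = fI n (a - t)
      rw [hma, fI]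
    rw [hcong, intervalIntegral.integral_comp_sub_right (fun u => fI n u) t,
      show t - 1 - t = (-1:ℝ) by ring, show t/2 - t = -(t/2) by ring]
    have hev : ∫ u in (-1:ℝ)..(-(t/2)), fI n u
        = ∫ u in (-1:ℝ)..(-(t/2)), (fun v => fI n (-v)) u := by
      apply intervalIntegral.integral_congr
      intro u _
      simp [fI]
    rw [hev, intervalIntegral.integral_comp_neg (fun v => fI n v), AI]
    norm_num
  have hval : ∫ a in Icc (t-1) 1, q a = 2 * AI n t := by
    rw [MeasureTheory.integral_Icc_eq_integral_Ioc,
      ← intervalIntegral.integral_of_le (by linarith : t-1 ≤ (1:ℝ)), ← hsplit, hp1, hp2]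
    ring
  rw [← ofReal_integral_eq_lintegral_ofReal hint
    (Filter.Eventually.of_forall fun a => hqnn a), hval]
lemma numerator (n : ℕ) :
    (volume {p : Euc (n+1) × Euc (n+1) |
        p.1 ∈ closedBall 0 1 ∧ p.2 ∈ closedBall 0 1 ∧ dist p.1 p.2 ≤ 1}).toReal
      = 3 * (volume (closedBall (0 : Euc (n+1)) 1)).toReal
          * (volume (closedBall (0 : Euc n) 1)).toReal * KI n := by
  set v' : ℝ := (volume (closedBall (0 : Euc n) 1)).toReal with hv'
  have hv'nn : 0 ≤ v' := ENNReal.toReal_nonneg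
  have hVne : volume (closedBall (0 : Euc n) 1) ≠ ⊤ := by
    exact (measure_closedBall_lt_top).ne
  set F : Euc (n+1) → ℝ := fun x => v' * (2 * AI n ‖x‖) with hF
  have hFc : Continuous F := by
    apply continuous_const.mul
    exact continuous_const.mul ((AI_continuous n).comp continuous_norm)
  -- pointwise identification on the ball
  have hpt : ∀ x ∈ closedBall (0 : Euc (n+1)) 1,
      volume (closedBall (0 : Euc (n+1)) 1 ∩ closedBall x 1) = ENNReal.ofReal (F x) := by
    intro x hx
    have hx1 : ‖x‖ ≤ 1 := mem_closedBall_zero_iff.mp hx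
    rw [rot_vol n x, slice_vol n (norm_nonneg x) hx1, hF]
    rw [← ENNReal.ofReal_toReal hVne, ← hv', ← ENNReal.ofReal_mul hv'nn]
  have hN : volume {p : Euc (n+1) × Euc (n+1) |
        p.1 ∈ closedBall 0 1 ∧ p.2 ∈ closedBall 0 1 ∧ dist p.1 p.2 ≤ 1}
      = ∫⁻ x in closedBall (0 : Euc (n+1)) 1, ENNReal.ofReal (F x) := by
    rw [prod_vol n]
    exact setLIntegral_congr_fun measurableSet_closedBall
      hpt
  have hFnn : ∀ x ∈ closedBall (0 : Euc (n+1)) 1, 0 ≤ F x := by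
    intro x hx
    have hx1 : ‖x‖ ≤ 1 := mem_closedBall_zero_iff.mp hx
    have := AI_nonneg n (t := ‖x‖) (by linarith)
    rw [hF]
    positivity
  have hFint : IntegrableOn F (closedBall (0 : Euc (n+1)) 1) volume :=
    hFc.continuousOn.integrableOn_compact (isCompact_closedBall _ _)
  rw [hN, ← ofReal_integral_eq_lintegral_ofReal hFint
      ((ae_restrict_iff' measurableSet_closedBall).mpr (Filter.Eventually.of_forall hFnn)),
    ENNReal.toReal_ofReal (setIntegral_nonneg measurableSet_closedBall hFnn)]
  -- now Bochner integral over the ball; go to integral over whole space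
  set G : ℝ → ℝ := fun r => if r ≤ 1 then v' * (2 * AI n r) else 0 with hG
  have hind : (fun x => Set.indicator (closedBall (0 : Euc (n+1)) 1) F x)
      = fun x => G ‖x‖ := by
    funext x
    by_cases h : ‖x‖ ≤ 1
    · rw [Set.indicator_of_mem (mem_closedBall_zero_iff.mpr h), hG]
      simp only [if_pos h, hF]
    · rw [Set.indicator_of_notMem (fun hc => h (mem_closedBall_zero_iff.mp hc)), hG]
      simp only [if_neg h]
  have hstep : ∫ x in closedBall (0 : Euc (n+1)) 1, F x = ∫ x : Euc (n+1), G ‖x‖ := by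
    rw [← MeasureTheory.integral_indicator measurableSet_closedBall, hind]
  rw [hstep]
  have hpolar := integral_fun_norm_addHaar (volume : Measure (Euc (n+1))) G
  rw [finrank_euclideanSpace_fin] at hpolar
  rw [hpolar]
  rw [Measure.addHaar_closedBall_eq_addHaar_ball]
  -- compute the radial integral
  have hioc : ∀ y ∈ Ioi (0:ℝ), y^((n+1)-1) • G y
      = (Ioc (0:ℝ) 1).indicator (fun y => y^n * (v' * (2 * AI n y))) y := by
    intro y hy
    rw [mem_Ioi] at hy
    by_cases h : y ≤ 1
    · rw [Set.indicator_of_mem (mem_Ioc.mpr ⟨hy, h⟩), hG]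
      simp only [if_pos h, smul_eq_mul, Nat.add_sub_cancel]
    · rw [Set.indicator_of_notMem (fun hc => h (mem_Ioc.mp hc).2), hG]
      simp only [if_neg h, smul_eq_mul, mul_zero]
  rw [setIntegral_congr_fun measurableSet_Ioi hioc,
    MeasureTheory.setIntegral_indicator measurableSet_Ioc,
    show Ioi (0:ℝ) ∩ Ioc 0 1 = Ioc 0 1 by ext y; simp only [mem_inter_iff, mem_Ioi, mem_Ioc]; tauto,
    ← intervalIntegral.integral_of_le zero_le_one]
  have hpull : ∫ y in (0:ℝ)..1, y^n * (v' * (2 * AI n y))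
      = (2 * v') * ∫ y in (0:ℝ)..1, y^n * AI n y := by
    rw [← intervalIntegral.integral_const_mul]
    apply intervalIntegral.integral_congr
    intro y _
    ring
  rw [hpull]
  have hparts := parts_main n
  rw [smul_eq_mul, nsmul_eq_mul]
  push_cast
  rw [measureReal_def]
  linear_combination (2 * (volume (ball (0 : Euc (n+1)) 1)).toReal * v') * hparts
lemma vball (k : ℕ) : (volume (closedBall (0 : Euc k) 1)).toReal
    = Real.sqrt Real.pi ^ k / Real.Gamma ((k:ℝ)/2 + 1) := by
  cases k with
  | zero =>
    rw [volume_euclideanSpace_eq_dirac, Measure.dirac_apply' _ measurableSet_closedBall]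
    simp [Real.Gamma_one]
  | succ m =>
    rw [EuclideanSpace.volume_closedBall]
    simp only [Fintype.card_fin, ENNReal.ofReal_one, one_pow, one_mul]
    have hg : 0 < Real.Gamma ((↑(m+1):ℝ)/2 + 1) := Real.Gamma_pos_of_pos (by positivity)
    have hs : (0:ℝ) ≤ Real.sqrt Real.pi := Real.sqrt_nonneg _
    rw [ENNReal.toReal_ofReal (by positivity)]

end BallBeta

/-- For every `d ≥ 1`, `w_d = (3/2) · P{β(1/2, (d+1)/2) ≥ 1/4}`. -/
theorem ballPairProb_eq_three_half_mul_beta_prob (d : ℕ) (hd : 1 ≤ d) :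
    ballPairProb d =
      (3 / 2) * (betaMeasure (1 / 2) ((d + 1) / 2) {x : ℝ | 1 / 4 ≤ x}).toReal := by
  obtain ⟨n, rfl⟩ : ∃ n, d = n + 1 := ⟨d - 1, (Nat.succ_pred_eq_of_pos hd).symm⟩
  have hb : ((((n+1:ℕ)):ℝ) + 1)/2 = (n:ℝ)/2 + 1 := by push_cast; ring
  rw [ballPairProb, BallBeta.numerator n, BallBeta.beta_eval n _ hb,
    BallBeta.vball (n+1), BallBeta.vball n]
  have h12 : (1:ℝ)/2 + (((n+1:ℕ):ℝ) + 1)/2 = ((n+1:ℕ):ℝ)/2 + 1 := by push_cast; ring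
  rw [h12, hb, Real.Gamma_one_half_eq]
  set S : ℝ := Real.sqrt Real.pi with hS
  have hSpos : 0 < S := Real.sqrt_pos.mpr Real.pi_pos
  have hGd : 0 < Real.Gamma (((n+1:ℕ):ℝ)/2 + 1) := Real.Gamma_pos_of_pos (by positivity)
  have hGb : 0 < Real.Gamma ((n:ℝ)/2 + 1) := Real.Gamma_pos_of_pos (by positivity)
  field_simp
  ring

end
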